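/- arXiv:2311.08757 — 2 statements merged into one kernel-verified Lean document; each statement's English description precedes it below -/
import Mathlib

section
/- Lower spectral bound for the additive Schwarz operator from a stable decomposition: let A be a real symmetric positive definite n×n matrix; for i = 1,…,N let R_i be a real n_i×n matrix such that A_i := R_i·A·R_iᵀ is positive definite; define M⁻¹ := ∑_{i=1}^N R_iᵀ·A_i⁻¹·R_i. Assume there is a constant C₀ > 0 such that every x ∈ ℝⁿ admits a decomposition x = ∑_{i=1}^N R_iᵀ·x_i with x_i ∈ ℝ^{n_i} and ∑_{i=1}^N x_iᵀ·A_i·x_i ≤ C₀·xᵀ·A·x. Then for every x ∈ ℝⁿ, xᵀ·A·x ≤ C₀ · xᵀ·A·M⁻¹·A·x; equivalently, the smallest eigenvalue of the preconditioned operator M⁻¹·A is at least 1/C₀. -/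
/-!
With `yᵢ := Aᵢ⁻¹ Rᵢ A x`, the stable decomposition gives `xᵀAx = ∑ xᵢᵀ Aᵢ yᵢ`, while
`xᵀ A M⁻¹ A x = ∑ yᵢᵀ Aᵢ yᵢ`. The inequality `2 C₀ xᵢᵀAᵢyᵢ ≤ xᵢᵀAᵢxᵢ + C₀² yᵢᵀAᵢyᵢ` in each
`Aᵢ`-inner product, summed over `i` and combined with stability, yields
`2 C₀ xᵀAx ≤ C₀ xᵀAx + C₀² xᵀAM⁻¹Ax`.
-/

open Matrix

namespace Matrix

variable {ι n α : Type*} {m : ι → Type*} [Fintype n] [∀ i, Fintype (m i)] [CommSemiring α]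

theorem sum_transpose_mulVec_dotProduct (s : Finset ι) (R : ∀ i, Matrix (m i) n α)
    (v : ∀ i, m i → α) (w : n → α) :
    (∑ i ∈ s, (R i)ᵀ *ᵥ v i) ⬝ᵥ w = ∑ i ∈ s, v i ⬝ᵥ R i *ᵥ w := by
  rw [sum_dotProduct]
  refine Finset.sum_congr rfl fun i _ => ?_
  rw [dotProduct_comm, dotProduct_transpose_mulVec]

theorem dotProduct_sum_transpose_mul_mul_mulVec (s : Finset ι) (R : ∀ i, Matrix (m i) n α)
    (B : ∀ i, Matrix (m i) (m i) α) (v : n → α) :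
    v ⬝ᵥ (∑ i ∈ s, (R i)ᵀ * B i * R i) *ᵥ v = ∑ i ∈ s, (R i *ᵥ v) ⬝ᵥ B i *ᵥ (R i *ᵥ v) := by
  simp only [sum_mulVec, ← mulVec_mulVec]
  rw [dotProduct_comm, sum_transpose_mulVec_dotProduct]
  exact Finset.sum_congr rfl fun i _ => dotProduct_comm _ _

theorem dotProduct_mul_mul_mulVec_of_isSymm {A : Matrix n n α} (hA : A.IsSymm)
    (M : Matrix n n α) (x : n → α) :
    x ⬝ᵥ (A * M * A) *ᵥ x = (A *ᵥ x) ⬝ᵥ M *ᵥ (A *ᵥ x) := by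
  rw [← mulVec_mulVec, ← mulVec_mulVec, dotProduct_mulVec, ← mulVec_transpose, hA.eq]

theorem PosDef.two_mul_dotProduct_le {k : Type*} [Fintype k] [DecidableEq k]
    {B : Matrix k k ℝ} (hB : B.PosDef) (x w : k → ℝ) (t : ℝ) :
    2 * t * (x ⬝ᵥ w) ≤ x ⬝ᵥ B *ᵥ x + t ^ 2 * (w ⬝ᵥ B⁻¹ *ᵥ w) := by
  set y := B⁻¹ *ᵥ w
  have hw : w = B *ᵥ y := by
    rw [mulVec_mulVec, mul_nonsing_inv _ ((isUnit_iff_isUnit_det B).mp hB.isUnit), one_mulVec]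
  have hsymm : ∀ u v, u ⬝ᵥ B *ᵥ v = v ⬝ᵥ B *ᵥ u := fun u v => by
    rw [← dotProduct_transpose_mulVec, (isHermitian_iff_isSymm.mp hB.isHermitian).eq]
  have hnonneg : 0 ≤ (x - t • y) ⬝ᵥ B *ᵥ (x - t • y) := hB.posSemidef.dotProduct_mulVec_nonneg _
  simp only [mulVec_sub, mulVec_smul, sub_dotProduct, dotProduct_sub, smul_dotProduct,
    dotProduct_smul, smul_eq_mul, hsymm y x] at hnonneg
  rw [hw, dotProduct_comm (B *ᵥ y)]
  linarith

end Matrix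

/-- Lower spectral bound for the additive Schwarz operator: if every `x` admits a
`C₀`-stable decomposition `x = ∑ Rᵢᵀ xᵢ` with `∑ xᵢᵀ Aᵢ xᵢ ≤ C₀ xᵀAx`, then
`xᵀAx ≤ C₀ · xᵀ A M⁻¹ A x` for the additive Schwarz preconditioner
`M⁻¹ = ∑ Rᵢᵀ Aᵢ⁻¹ Rᵢ`, i.e. `λmin(M⁻¹A) ≥ 1/C₀`. -/
theorem additive_schwarz_lower_bound
    (n N : ℕ) (ni : Fin N → ℕ)
    (A : Matrix (Fin n) (Fin n) ℝ) (hA : A.PosDef)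
    (R : (i : Fin N) → Matrix (Fin (ni i)) (Fin n) ℝ)
    (hAi : ∀ i, (R i * A * (R i)ᵀ).PosDef)
    (C₀ : ℝ) (hC₀ : 0 < C₀)
    (hstable : ∀ x : Fin n → ℝ, ∃ xi : (i : Fin N) → Fin (ni i) → ℝ,
      x = ∑ i, (R i)ᵀ.mulVec (xi i) ∧
      ∑ i, xi i ⬝ᵥ (R i * A * (R i)ᵀ).mulVec (xi i) ≤ C₀ * (x ⬝ᵥ A.mulVec x)) :
    ∀ x : Fin n → ℝ,
      x ⬝ᵥ A.mulVec x ≤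
        C₀ * (x ⬝ᵥ (A * (∑ i, (R i)ᵀ * (R i * A * (R i)ᵀ)⁻¹ * R i) * A).mulVec x) := by
  intro x
  obtain ⟨xi, hx, hs⟩ := hstable x
  have hq : x ⬝ᵥ A *ᵥ x = ∑ i, xi i ⬝ᵥ R i *ᵥ A *ᵥ x := by
    rw [← sum_transpose_mulVec_dotProduct, ← hx]
  rw [dotProduct_mul_mul_mulVec_of_isSymm (isHermitian_iff_isSymm.mp hA.isHermitian),
    dotProduct_sum_transpose_mul_mul_mulVec]
  have hamgm : 2 * C₀ * (x ⬝ᵥ A *ᵥ x) ≤ ∑ i, xi i ⬝ᵥ (R i * A * (R i)ᵀ) *ᵥ xi i +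
      C₀ ^ 2 * ∑ i, (R i *ᵥ A *ᵥ x) ⬝ᵥ (R i * A * (R i)ᵀ)⁻¹ *ᵥ (R i *ᵥ A *ᵥ x) := by
    rw [hq, Finset.mul_sum, Finset.mul_sum, ← Finset.sum_add_distrib]
    exact Finset.sum_le_sum fun i _ => (hAi i).two_mul_dotProduct_le _ _ _
  refine le_of_mul_le_mul_left ?_ hC₀
  linarith
end

section
/- Upper spectral bound for the additive Schwarz operator from a finite coloring: let A be a real symmetric positive definite n×n matrix; for i = 1,…,N let R_i be a real n_i×n matrix such that A_i := R_i·A·R_iᵀ is positive definite; define M⁻¹ := ∑_{i=1}^N R_iᵀ·A_i⁻¹·R_i. Assume there is a coloring c : {1,…,N} → {1,…,k} such that R_i·A·R_jᵀ = 0 whenever i ≠ j and c(i) = c(j). Then for every x ∈ ℝⁿ, xᵀ·A·M⁻¹·A·x ≤ k · xᵀ·A·x; equivalently, the largest eigenvalue of the preconditioned operator M⁻¹·A is at most the number of colors k. -/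
open Matrix

/-!
For each color `ℓ`, the sum `Pℓ` of the local solves `Rᵢᴴ Aᵢ⁻¹ Rᵢ` over the indices of color `ℓ`
satisfies `Pℓ A Pℓ = Pℓ`, because the cross terms vanish by `A`-orthogonality. Hence `Pℓ A` is an
`A`-orthogonal projection and `A - A Pℓ A = (1 - Pℓ A)ᴴ A (1 - Pℓ A)` is positive semidefinite.
Summing over the `k` colors gives `A M⁻¹ A ≤ k A` in the Loewner order.
-/

theorem Finset.sum_mul_mul_sum_self_of_orthogonal {ι R : Type*} [NonUnitalNonAssocSemiring R]
    {s : Finset ι} {T : ι → R} {a : R} (hself : ∀ i ∈ s, T i * a * T i = T i)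
    (horth : ∀ i ∈ s, ∀ j ∈ s, i ≠ j → T i * a * T j = 0) :
    (∑ i ∈ s, T i) * a * ∑ i ∈ s, T i = ∑ i ∈ s, T i := by
  rw [Finset.sum_mul, Finset.sum_mul_sum]
  refine Finset.sum_congr rfl fun i hi => ?_
  rw [Finset.sum_eq_single_of_mem i hi fun j hj hji => horth i hi j hj hji.symm, hself i hi]

namespace Matrix

variable {n m m' : Type*} [Fintype n] [Fintype m] [Fintype m'] [DecidableEq m] [DecidableEq m']

section Correction

variable {α : Type*} [CommRing α] [StarRing α]

/-- The local solve `Rᴴ (R A Rᴴ)⁻¹ R` of a Schwarz method; right-multiplied by `A` it is the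
`A`-orthogonal projection onto the range of `Rᴴ`. -/
noncomputable def schwarzCorrection (A : Matrix n n α) (R : Matrix m n α) : Matrix n n α :=
  Rᴴ * (R * A * Rᴴ)⁻¹ * R

variable {A : Matrix n n α}

theorem schwarzCorrection_mul_mul_self {R : Matrix m n α} (hR : IsUnit (R * A * Rᴴ).det) :
    schwarzCorrection A R * A * schwarzCorrection A R = schwarzCorrection A R := by
  calc schwarzCorrection A R * A * schwarzCorrection A R
      = Rᴴ * ((R * A * Rᴴ)⁻¹ * (R * A * Rᴴ)) * (R * A * Rᴴ)⁻¹ * R := by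
        simp only [schwarzCorrection, Matrix.mul_assoc]
    _ = schwarzCorrection A R := by
        rw [nonsing_inv_mul _ hR, Matrix.mul_one, schwarzCorrection]

theorem schwarzCorrection_mul_mul_eq_zero {R : Matrix m n α} {S : Matrix m' n α}
    (hRS : R * A * Sᴴ = 0) : schwarzCorrection A R * A * schwarzCorrection A S = 0 := by
  calc schwarzCorrection A R * A * schwarzCorrection A S
      = Rᴴ * (R * A * Rᴴ)⁻¹ * (R * A * Sᴴ) * (S * A * Sᴴ)⁻¹ * S := by
        simp only [schwarzCorrection, Matrix.mul_assoc]
    _ = 0 := by rw [hRS]; simp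

theorem IsHermitian.schwarzCorrection (hA : A.IsHermitian) (R : Matrix m n α) :
    (schwarzCorrection A R).IsHermitian := by
  simpa [Matrix.schwarzCorrection, Matrix.mul_assoc] using
    isHermitian_conjTranspose_mul_mul R (isHermitian_mul_mul_conjTranspose R hA).inv

end Correction

section Order

variable {α : Type*} [CommRing α] [PartialOrder α] [StarRing α] {A P : Matrix n n α}

theorem PosSemidef.sub_mul_mul (hA : A.PosSemidef) (hP : P.IsHermitian) (hPAP : P * A * P = P) :
    (A - A * P * A).PosSemidef := by
  classical
  have hdecomp : A - A * P * A = (1 - P * A)ᴴ * A * (1 - P * A) := by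
    rw [conjTranspose_sub, conjTranspose_one, conjTranspose_mul, hA.isHermitian.eq, hP.eq]
    calc A - A * P * A = A - A * P * A - A * P * A + A * (P * A * P) * A := by
          rw [hPAP]; abel
      _ = (1 - A * P) * A * (1 - P * A) := by noncomm_ring
  rw [hdecomp]
  exact hA.conjTranspose_mul_mul_same _

theorem PosSemidef.card_nsmul_sub_mul_sum_mul [AddLeftMono α] {ι κ : Type*} [Fintype ι]
    [Fintype κ] (hA : A.PosSemidef) {T : ι → Matrix n n α} (hT : ∀ i, (T i).IsHermitian)
    (hself : ∀ i, T i * A * T i = T i) (c : ι → κ)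
    (horth : ∀ i j, i ≠ j → c i = c j → T i * A * T j = 0) :
    (Fintype.card κ • A - A * (∑ i, T i) * A).PosSemidef := by
  classical
  set P : κ → Matrix n n α := fun ℓ => ∑ i with c i = ℓ, T i
  have hfiber : ∑ i, T i = ∑ ℓ, P ℓ := (Finset.sum_fiberwise _ c T).symm
  have hsplit : Fintype.card κ • A - A * (∑ ℓ, P ℓ) * A = ∑ ℓ, (A - A * P ℓ * A) := by
    simp [Finset.sum_sub_distrib, Finset.mul_sum, Finset.sum_mul]
  rw [hfiber, hsplit]
  refine posSemidef_sum _ fun ℓ _ => hA.sub_mul_mul (isSelfAdjoint_sum _ fun i _ => hT i) ?_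
  refine Finset.sum_mul_mul_sum_self_of_orthogonal (fun i _ => hself i) fun i hi j hj hij => ?_
  simp only [Finset.mem_filter] at hi hj
  exact horth i j hij (hi.2.trans hj.2.symm)

end Order

end Matrix

theorem additive_schwarz_upper_bound_general
    (n N : ℕ) (ni : Fin N → ℕ)
    (A : Matrix (Fin n) (Fin n) ℝ) (hA : A.PosDef)
    (R : (i : Fin N) → Matrix (Fin (ni i)) (Fin n) ℝ)
    (hAi : ∀ i, (R i * A * (R i)ᵀ).PosDef)
    (k : ℕ) (c : Fin N → Fin k)
    (hcolor : ∀ i j, i ≠ j → c i = c j → R i * A * (R j)ᵀ = 0) :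
    ∀ x : Fin n → ℝ,
      x ⬝ᵥ (A * (∑ i, (R i)ᵀ * (R i * A * (R i)ᵀ)⁻¹ * R i) * A).mulVec x ≤
        (k : ℝ) * (x ⬝ᵥ A.mulVec x) := by
  intro x
  simp only [← conjTranspose_eq_transpose_of_trivial] at hAi hcolor ⊢
  have hbound := hA.posSemidef.card_nsmul_sub_mul_sum_mul
    (fun i => hA.isHermitian.schwarzCorrection (R i))
    (fun i => schwarzCorrection_mul_mul_self (hAi i).det_pos.ne'.isUnit) c
    (fun i j hij hc => schwarzCorrection_mul_mul_eq_zero (hcolor i j hij hc))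
  simpa only [schwarzCorrection, Fintype.card_fin, star_trivial, sub_mulVec, dotProduct_sub,
    ← Nat.cast_smul_eq_nsmul ℝ, smul_mulVec, dotProduct_smul, smul_eq_mul, sub_nonneg]
    using hbound.dotProduct_mulVec_nonneg x

/-- Upper spectral bound for the additive Schwarz operator from a finite coloring:
if `Rᵢ A Rⱼᵀ = 0` for distinct same-colored indices, then
`xᵀ A M⁻¹ A x ≤ k · xᵀAx` for the additive Schwarz preconditioner
`M⁻¹ = ∑ Rᵢᵀ Aᵢ⁻¹ Rᵢ`, i.e. `λmax(M⁻¹A) ≤ k`, the number of colors. -/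
theorem additive_schwarz_upper_bound
    (n N : ℕ) (ni : Fin N → ℕ)
    (A : Matrix (Fin n) (Fin n) ℝ) (hA : A.PosDef)
    (R : (i : Fin N) → Matrix (Fin (ni i)) (Fin n) ℝ)
    (hAi : ∀ i, (R i * A * (R i)ᵀ).PosDef)
    (k : ℕ) (hk : 0 < k) (c : Fin N → Fin k)
    (hcolor : ∀ i j, i ≠ j → c i = c j → R i * A * (R j)ᵀ = 0) :
    ∀ x : Fin n → ℝ,
      x ⬝ᵥ (A * (∑ i, (R i)ᵀ * (R i * A * (R i)ᵀ)⁻¹ * R i) * A).mulVec x ≤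
        (k : ℝ) * (x ⬝ᵥ A.mulVec x) :=
  additive_schwarz_upper_bound_general n N ni A hA R hAi k c hcolor
end
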